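/- For every complex number q with |q| < 1 (with values of q making any denominator factor 1 + q^j vanish excluded), ∑_{m≥1, n≥0} q^{2m+n} (−q^3; q^3)_{m−1} (−q; q)_{m+n} (q^3; q^3)_{m+n−1} / [ (−q; q)_{m−1} (q; q)_m^2 (q; q)_{m+n−1} (−q^3; q^3)_{m+n} ] = (1/3)·(q^3; q^3)_∞ / (q; q)_∞^3 − (1/2)·(q^3; q^3)_∞ (−q; q)_∞ / [ (−q^3; q^3)_∞ (q; q)_∞ ] + 1/6. -/

import Mathlib

/-- Finite q-Pochhammer symbol `(a; q)_n = ∏_{j=0}^{n-1} (1 - a q^j)`. -/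
noncomputable def qPoch (q a : ℂ) (n : ℕ) : ℂ := ∏ j ∈ Finset.range n, (1 - a * q ^ j)

/-- Infinite q-Pochhammer symbol `(a; q)_∞ = ∏_{j=0}^{∞} (1 - a q^j)`. -/
noncomputable def qPochInf (q a : ℂ) : ℂ := ∏' j : ℕ, (1 - a * q ^ j)

/-!
Since `(1 - x)(1 + x + x²) = 1 - x³`, the ratios `P_k = (q³;q³)_k / (q;q)_k` and
`Q_k = (-q³;q³)_k / (-q;q)_k` are the partial products of `1 + q^j + q^{2j}` and
`1 - q^j + q^{2j}`. In these terms the summand of index `(m, n)` is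
`(v_m - v_{m-1}) (u_{m+n} - u_{m+n-1})` with `u = P / (2Q)` and `v = Q / (q;q)²`, and moreover
`(v_{i+1} - v_i) u_i = w_{i+1} - w_i` for `w = P / (6 (q;q)²)`. The inner sum over `n` telescopes
to `U - u_{m-1}`, after which the outer sum telescopes twice, giving `(V - 1) U - (W - 1/6)` in terms
of the limits `U, V, W` of `u, v, w`.
-/

open Filter Finset Topology

section NormedRing

variable {R : Type*} [NormedRing R] [NormOneClass R]

lemma one_sub_ne_zero_of_norm_lt_one {x : R} (hx : ‖x‖ < 1) : 1 - x ≠ 0 := by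
  intro h
  rw [← sub_eq_zero.1 h, norm_one] at hx
  exact lt_irrefl _ hx

lemma one_add_add_sq_ne_zero_of_norm_lt_one {x : R} (hx : ‖x‖ < 1) : 1 + x + x ^ 2 ≠ 0 := by
  have hx3 : ‖x ^ 3‖ < 1 :=
    (norm_pow_le x 3).trans_lt (pow_lt_one₀ (norm_nonneg x) hx (by norm_num))
  intro h
  apply one_sub_ne_zero_of_norm_lt_one hx3
  calc 1 - x ^ 3 = (1 - x) * (1 + x + x ^ 2) := by noncomm_ring
    _ = 0 := by rw [h, mul_zero]

lemma one_sub_add_sq_ne_zero_of_norm_lt_one {x : R} (hx : ‖x‖ < 1) : 1 - x + x ^ 2 ≠ 0 := by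
  simpa only [neg_sq, ← sub_eq_add_neg] using
    one_add_add_sq_ne_zero_of_norm_lt_one (x := -x) (by rwa [norm_neg])

end NormedRing

theorem Summable.hasSum_sub_of_tendsto {G : Type*} [AddCommGroup G] [TopologicalSpace G]
    [IsTopologicalAddGroup G] [T2Space G] {f : ℕ → G} {L : G}
    (hs : Summable fun n => f (n + 1) - f n) (hf : Tendsto f atTop (𝓝 L)) :
    HasSum (fun n => f (n + 1) - f n) (L - f 0) := by
  rw [hs.hasSum_iff_tendsto_nat]
  simp_rw [sum_range_sub]
  exact hf.sub_const _

theorem hasSum_sub_mul_sub_add_of_tendsto {R : Type*} [NormedRing R] [NormMulClass R]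
    [NormOneClass R] [CompleteSpace R] {u v w : ℕ → R} {U V W : R}
    (hu : Tendsto u atTop (𝓝 U)) (hv : Tendsto v atTop (𝓝 V)) (hw : Tendsto w atTop (𝓝 W))
    (hdu : Summable fun n => ‖u (n + 1) - u n‖) (hdv : Summable fun n => ‖v (n + 1) - v n‖)
    (hvuw : ∀ i, (v (i + 1) - v i) * u i = w (i + 1) - w i) :
    HasSum (fun p : ℕ × ℕ => (v (p.1 + 1) - v p.1) * (u (p.1 + p.2 + 1) - u (p.1 + p.2)))
      ((V - v 0) * U - (W - w 0)) := by
  have hsum : Summable fun p : ℕ × ℕ =>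
      (v (p.1 + 1) - v p.1) * (u (p.1 + p.2 + 1) - u (p.1 + p.2)) := by
    have hinj : Function.Injective fun p : ℕ × ℕ => (p.1, p.1 + p.2) := by
      rintro ⟨i, n⟩ ⟨j, m⟩ h
      simp only [Prod.mk.injEq] at h
      ext <;> omega
    have hprod := summable_mul_of_summable_norm hdv hdu
    have hcomp := Summable.comp_injective hprod hinj
    exact hcomp
  have hinner : ∀ i, HasSum (fun n => (v (i + 1) - v i) * (u (i + n + 1) - u (i + n)))
      ((v (i + 1) - v i) * (U - u i)) := by
    intro i
    have htail : Tendsto (fun n => u (i + n)) atTop (𝓝 U) :=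
      hu.comp (tendsto_atTop_mono (fun n => Nat.le_add_left n i) tendsto_id)
    have hs : Summable fun n => u (i + (n + 1)) - u (i + n) := by
      have hs' := hdu.of_norm
      have hcomp := Summable.comp_injective hs' (add_right_injective i)
      simpa only [Function.comp_def, add_assoc] using hcomp
    have htel := hs.hasSum_sub_of_tendsto (f := fun n => u (i + n)) htail
    simpa only [add_assoc, add_zero] using htel.mul_left (v (i + 1) - v i)
  have hsv := hdv.of_norm.hasSum_sub_of_tendsto (f := v) hv
  have hsw : HasSum (fun i => (v (i + 1) - v i) * u i) (W - w 0) := by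
    simp_rw [hvuw]
    refine Summable.hasSum_sub_of_tendsto (f := w) ?_ hw
    simpa only [hvuw] using hdv.mul_tendsto_const (hu.mono_left Nat.cofinite_eq_atTop.le)
  have houter : HasSum (fun i => (v (i + 1) - v i) * (U - u i)) ((V - v 0) * U - (W - w 0)) := by
    simpa only [mul_sub] using (hsv.mul_right U).sub hsw
  exact (hsum.hasSum.prod_fiberwise hinner).unique houter ▸ hsum.hasSum

lemma qPoch_zero (q a : ℂ) : qPoch q a 0 = 1 := prod_range_zero _

lemma qPoch_succ (q a : ℂ) (n : ℕ) : qPoch q a (n + 1) = qPoch q a n * (1 - a * q ^ n) :=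
  prod_range_succ _ _

lemma norm_mul_pow_lt_one {q a : ℂ} (hq : ‖q‖ ≤ 1) (ha : ‖a‖ < 1) (j : ℕ) : ‖a * q ^ j‖ < 1 :=
  calc ‖a * q ^ j‖ = ‖a‖ * ‖q‖ ^ j := by rw [norm_mul, norm_pow]
    _ ≤ ‖a‖ := mul_le_of_le_one_right (norm_nonneg a) (pow_le_one₀ (norm_nonneg q) hq)
    _ < 1 := ha

lemma norm_pow_succ_lt_one {q : ℂ} (hq : ‖q‖ < 1) (k : ℕ) : ‖q ^ (k + 1)‖ < 1 := by
  rw [norm_pow]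
  exact pow_lt_one₀ (norm_nonneg q) hq (Nat.succ_ne_zero k)

lemma qPoch_ne_zero {q a : ℂ} (hq : ‖q‖ ≤ 1) (ha : ‖a‖ < 1) (n : ℕ) : qPoch q a n ≠ 0 :=
  prod_ne_zero_iff.2 fun j _ => one_sub_ne_zero_of_norm_lt_one (norm_mul_pow_lt_one hq ha j)

lemma summable_norm_neg_mul_pow {q : ℂ} (hq : ‖q‖ < 1) (a : ℂ) :
    Summable fun j : ℕ => ‖-(a * q ^ j)‖ := by
  simpa only [norm_neg, norm_mul, norm_pow] using
    (summable_geometric_of_lt_one (norm_nonneg q) hq).mul_left ‖a‖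

lemma tendsto_qPoch {q : ℂ} (hq : ‖q‖ < 1) (a : ℂ) :
    Tendsto (qPoch q a) atTop (𝓝 (qPochInf q a)) := by
  have hmul := multipliable_one_add_of_summable (summable_norm_neg_mul_pow hq a)
  simp only [← sub_eq_add_neg] at hmul
  exact hmul.hasProd.tendsto_prod_nat

lemma qPochInf_ne_zero {q a : ℂ} (hq : ‖q‖ < 1) (ha : ‖a‖ < 1) : qPochInf q a ≠ 0 := by
  have hne := tprod_one_add_ne_zero_of_summable
    (fun j => by simpa only [← sub_eq_add_neg] using
      one_sub_ne_zero_of_norm_lt_one (norm_mul_pow_lt_one hq.le ha j))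
    (summable_norm_neg_mul_pow hq a)
  simpa only [← sub_eq_add_neg, qPochInf] using hne

noncomputable def qCubeCofactor (q a : ℂ) (n : ℕ) : ℂ :=
  ∏ j ∈ range n, (1 + a * q ^ j + (a * q ^ j) ^ 2)

lemma qCubeCofactor_zero (q a : ℂ) : qCubeCofactor q a 0 = 1 := prod_range_zero _

lemma qCubeCofactor_succ (q a : ℂ) (n : ℕ) :
    qCubeCofactor q a (n + 1) = qCubeCofactor q a n * (1 + a * q ^ n + (a * q ^ n) ^ 2) :=
  prod_range_succ _ _

lemma qCubeCofactor_ne_zero {q a : ℂ} (hq : ‖q‖ ≤ 1) (ha : ‖a‖ < 1) (n : ℕ) :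
    qCubeCofactor q a n ≠ 0 :=
  prod_ne_zero_iff.2 fun j _ =>
    one_add_add_sq_ne_zero_of_norm_lt_one (norm_mul_pow_lt_one hq ha j)

lemma qPoch_pow_three (q a : ℂ) (n : ℕ) :
    qPoch (q ^ 3) (a ^ 3) n = qPoch q a n * qCubeCofactor q a n := by
  rw [qPoch, qPoch, qCubeCofactor, ← prod_mul_distrib]
  refine prod_congr rfl fun j _ => ?_
  rw [← pow_mul, mul_comm 3 j, pow_mul]
  ring

lemma tendsto_qCubeCofactor {q a : ℂ} (hq : ‖q‖ < 1) (ha : ‖a‖ < 1) :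
    Tendsto (qCubeCofactor q a) atTop (𝓝 (qPochInf (q ^ 3) (a ^ 3) / qPochInf q a)) := by
  have heq : qCubeCofactor q a = fun n => qPoch (q ^ 3) (a ^ 3) n / qPoch q a n := by
    funext n
    rw [qPoch_pow_three, mul_div_cancel_left₀ _ (qPoch_ne_zero hq.le ha n)]
  rw [heq]
  exact (tendsto_qPoch (norm_pow_succ_lt_one hq 2) _).div (tendsto_qPoch hq a) (qPochInf_ne_zero hq ha)

lemma qPochInf_pow_three_div_ne_zero {q a : ℂ} (hq : ‖q‖ < 1) (ha : ‖a‖ < 1) :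
    qPochInf (q ^ 3) (a ^ 3) / qPochInf q a ≠ 0 :=
  div_ne_zero (qPochInf_ne_zero (norm_pow_succ_lt_one hq 2) (norm_pow_succ_lt_one ha 2))
    (qPochInf_ne_zero hq ha)

lemma summable_norm_pow_succ_mul {q : ℂ} (hq : ‖q‖ < 1) {g : ℕ → ℂ} {c : ℂ}
    (hg : Tendsto g atTop (𝓝 c)) : Summable fun n => ‖q ^ (n + 1) * g n‖ := by
  have hgeom : Summable fun n => ‖q ^ (n + 1)‖ :=
    ((summable_geometric_of_lt_one (norm_nonneg q) hq).mul_right ‖q‖).congr fun n => by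
      rw [norm_pow, pow_succ]
  exact summable_norm_iff.2 (hgeom.mul_tendsto_const (hg.mono_left Nat.cofinite_eq_atTop.le))

section Increments

variable {q : ℂ}

lemma qPoch_self_succ (k : ℕ) : qPoch q q (k + 1) = qPoch q q k * (1 - q ^ (k + 1)) := by
  rw [qPoch_succ, pow_succ' q k]

lemma qCubeCofactor_self_succ (k : ℕ) :
    qCubeCofactor q q (k + 1) = qCubeCofactor q q k * (1 + q ^ (k + 1) + (q ^ (k + 1)) ^ 2) := by
  rw [qCubeCofactor_succ, pow_succ' q k]

lemma qCubeCofactor_neg_succ (k : ℕ) :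
    qCubeCofactor q (-q) (k + 1)
      = qCubeCofactor q (-q) k * (1 - q ^ (k + 1) + (q ^ (k + 1)) ^ 2) := by
  rw [qCubeCofactor_succ, pow_succ' q k]
  ring

variable (hq : ‖q‖ < 1)
include hq

lemma qCubeCofactor_div_succ_sub (k : ℕ) :
    qCubeCofactor q q (k + 1) / (2 * qCubeCofactor q (-q) (k + 1))
      - qCubeCofactor q q k / (2 * qCubeCofactor q (-q) k)
    = q ^ (k + 1) * (qCubeCofactor q q k / qCubeCofactor q (-q) (k + 1)) := by
  have hq' : ‖-q‖ < 1 := by rwa [norm_neg]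
  have hQ := qCubeCofactor_ne_zero hq.le hq' k
  have hfactor := one_sub_add_sq_ne_zero_of_norm_lt_one (norm_pow_succ_lt_one hq k)
  rw [qCubeCofactor_self_succ, qCubeCofactor_neg_succ]
  generalize q ^ (k + 1) = x at *
  field_simp
  ring

lemma qCubeCofactor_neg_div_sq_succ_sub (k : ℕ) :
    qCubeCofactor q (-q) (k + 1) / qPoch q q (k + 1) ^ 2
      - qCubeCofactor q (-q) k / qPoch q q k ^ 2
    = q ^ (k + 1) * (qCubeCofactor q (-q) k / qPoch q q (k + 1) ^ 2) := by
  have hE := qPoch_ne_zero hq.le hq k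
  have hfactor := one_sub_ne_zero_of_norm_lt_one (norm_pow_succ_lt_one hq k)
  rw [qCubeCofactor_neg_succ, qPoch_self_succ]
  generalize q ^ (k + 1) = x at *
  field_simp
  ring

lemma qCubeCofactor_self_div_sq_succ_sub (k : ℕ) :
    qCubeCofactor q q (k + 1) / (6 * qPoch q q (k + 1) ^ 2)
      - qCubeCofactor q q k / (6 * qPoch q q k ^ 2)
    = q ^ (k + 1) * (qCubeCofactor q q k / (2 * qPoch q q (k + 1) ^ 2)) := by
  have hE := qPoch_ne_zero hq.le hq k
  have hfactor := one_sub_ne_zero_of_norm_lt_one (norm_pow_succ_lt_one hq k)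
  rw [qCubeCofactor_self_succ, qPoch_self_succ]
  generalize q ^ (k + 1) = x at *
  field_simp
  ring

lemma summable_norm_qCubeCofactor_div_succ_sub :
    Summable fun k => ‖qCubeCofactor q q (k + 1) / (2 * qCubeCofactor q (-q) (k + 1))
      - qCubeCofactor q q k / (2 * qCubeCofactor q (-q) k)‖ := by
  have hq' : ‖-q‖ < 1 := by rwa [norm_neg]
  have hQ := tendsto_qCubeCofactor hq hq'
  simpa only [qCubeCofactor_div_succ_sub hq] using
    summable_norm_pow_succ_mul hq
      (g := fun n => qCubeCofactor q q n / qCubeCofactor q (-q) (n + 1))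
      ((tendsto_qCubeCofactor hq hq).div (hQ.comp (tendsto_add_atTop_nat 1))
        (qPochInf_pow_three_div_ne_zero hq hq'))

lemma summable_norm_qCubeCofactor_neg_div_sq_succ_sub :
    Summable fun k => ‖qCubeCofactor q (-q) (k + 1) / qPoch q q (k + 1) ^ 2
      - qCubeCofactor q (-q) k / qPoch q q k ^ 2‖ := by
  have hq' : ‖-q‖ < 1 := by rwa [norm_neg]
  have hE := (tendsto_qPoch hq q).comp (tendsto_add_atTop_nat 1)
  simpa only [qCubeCofactor_neg_div_sq_succ_sub hq] using
    summable_norm_pow_succ_mul hq (g := fun n => qCubeCofactor q (-q) n / qPoch q q (n + 1) ^ 2)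
      ((tendsto_qCubeCofactor hq hq').div (hE.pow 2) (pow_ne_zero 2 (qPochInf_ne_zero hq hq)))

lemma qCubeCofactor_neg_div_sq_succ_sub_mul (k : ℕ) :
    (qCubeCofactor q (-q) (k + 1) / qPoch q q (k + 1) ^ 2
      - qCubeCofactor q (-q) k / qPoch q q k ^ 2)
      * (qCubeCofactor q q k / (2 * qCubeCofactor q (-q) k))
    = qCubeCofactor q q (k + 1) / (6 * qPoch q q (k + 1) ^ 2)
      - qCubeCofactor q q k / (6 * qPoch q q k ^ 2) := by
  have := qCubeCofactor_ne_zero hq.le (by rwa [norm_neg] : ‖-q‖ < 1) k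
  rw [qCubeCofactor_neg_div_sq_succ_sub hq, qCubeCofactor_self_div_sq_succ_sub hq]
  field_simp

lemma summand_eq_increment_mul_increment (i n : ℕ) :
    q ^ (2 * (i + 1) + n) * qPoch (q ^ 3) (-q ^ 3) i *
        qPoch q (-q) (i + 1 + n) * qPoch (q ^ 3) (q ^ 3) (i + n) /
      (qPoch q (-q) i * (qPoch q q (i + 1)) ^ 2 * qPoch q q (i + n) *
        qPoch (q ^ 3) (-q ^ 3) (i + 1 + n))
    = (qCubeCofactor q (-q) (i + 1) / qPoch q q (i + 1) ^ 2
        - qCubeCofactor q (-q) i / qPoch q q i ^ 2)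
      * (qCubeCofactor q q (i + n + 1) / (2 * qCubeCofactor q (-q) (i + n + 1))
        - qCubeCofactor q q (i + n) / (2 * qCubeCofactor q (-q) (i + n))) := by
  have hq' : ‖-q‖ < 1 := by rwa [norm_neg]
  rw [qCubeCofactor_neg_div_sq_succ_sub hq, qCubeCofactor_div_succ_sub hq,
    show -q ^ 3 = (-q) ^ 3 by ring, qPoch_pow_three, qPoch_pow_three, qPoch_pow_three,
    show i + 1 + n = i + n + 1 by ring]
  have := qPoch_ne_zero hq.le hq' i
  have := qPoch_ne_zero hq.le hq' (i + n + 1)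
  have := qPoch_ne_zero hq.le hq (i + n)
  have := qPoch_ne_zero hq.le hq (i + 1)
  have := qCubeCofactor_ne_zero hq.le hq' (i + n + 1)
  field_simp
  ring

lemma hasSum_increment_mul_increment :
    HasSum (fun p : ℕ × ℕ =>
      (qCubeCofactor q (-q) (p.1 + 1) / qPoch q q (p.1 + 1) ^ 2
        - qCubeCofactor q (-q) p.1 / qPoch q q p.1 ^ 2)
      * (qCubeCofactor q q (p.1 + p.2 + 1) / (2 * qCubeCofactor q (-q) (p.1 + p.2 + 1))
        - qCubeCofactor q q (p.1 + p.2) / (2 * qCubeCofactor q (-q) (p.1 + p.2))))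
      ((qPochInf (q ^ 3) (-q ^ 3) / qPochInf q (-q) / qPochInf q q ^ 2 - 1)
          * (qPochInf (q ^ 3) (q ^ 3) / qPochInf q q
            / (2 * (qPochInf (q ^ 3) (-q ^ 3) / qPochInf q (-q))))
        - (qPochInf (q ^ 3) (q ^ 3) / qPochInf q q / (6 * qPochInf q q ^ 2) - 1 / 6)) := by
  have hq' : ‖-q‖ < 1 := by rwa [norm_neg]
  have hE0 := qPochInf_ne_zero hq hq
  have hQ0 := qPochInf_pow_three_div_ne_zero hq hq'
  have hE := tendsto_qPoch hq q
  have hP := tendsto_qCubeCofactor hq hq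
  have hQ := tendsto_qCubeCofactor hq hq'
  rw [Odd.neg_pow (by decide : Odd 3)] at hQ hQ0
  have hsum := hasSum_sub_mul_sub_add_of_tendsto
    (u := fun k => qCubeCofactor q q k / (2 * qCubeCofactor q (-q) k))
    (v := fun k => qCubeCofactor q (-q) k / qPoch q q k ^ 2)
    (w := fun k => qCubeCofactor q q k / (6 * qPoch q q k ^ 2))
    (hP.div (tendsto_const_nhds.mul hQ) (mul_ne_zero two_ne_zero hQ0))
    (hQ.div (hE.pow 2) (pow_ne_zero 2 hE0))
    (hP.div (tendsto_const_nhds.mul (hE.pow 2)) (mul_ne_zero (by norm_num) (pow_ne_zero 2 hE0)))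
    (summable_norm_qCubeCofactor_div_succ_sub hq)
    (summable_norm_qCubeCofactor_neg_div_sq_succ_sub hq)
    (qCubeCofactor_neg_div_sq_succ_sub_mul hq)
  simpa only [qPoch_zero, qCubeCofactor_zero, one_pow, div_one, mul_one] using hsum

end Increments

/- The double sum is over `m ≥ 1, n ≥ 0`, encoded by `m = p.1 + 1`, `n = p.2`. -/
theorem thmDS1_b (q : ℂ) (hq : ‖q‖ < 1) :
    ∑' p : ℕ × ℕ,
      q ^ (2 * (p.1 + 1) + p.2) * qPoch (q ^ 3) (-q ^ 3) p.1 *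
        qPoch q (-q) (p.1 + 1 + p.2) * qPoch (q ^ 3) (q ^ 3) (p.1 + p.2) /
      (qPoch q (-q) p.1 * (qPoch q q (p.1 + 1)) ^ 2 * qPoch q q (p.1 + p.2) *
        qPoch (q ^ 3) (-q ^ 3) (p.1 + 1 + p.2))
    = (1 / 3) * qPochInf (q ^ 3) (q ^ 3) / (qPochInf q q) ^ 3
      - (1 / 2) * (qPochInf (q ^ 3) (q ^ 3) * qPochInf q (-q)) /
          (qPochInf (q ^ 3) (-q ^ 3) * qPochInf q q)
      + 1 / 6 := by
  have hq' : ‖-q‖ < 1 := by rwa [norm_neg]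
  have hq3 : ‖-q ^ 3‖ < 1 := by rw [norm_neg]; exact norm_pow_succ_lt_one hq 2
  have hE0 := qPochInf_ne_zero hq hq
  have hM0 := qPochInf_ne_zero hq hq'
  have hN0 := qPochInf_ne_zero (norm_pow_succ_lt_one hq 2) hq3
  simp only [summand_eq_increment_mul_increment hq]
  rw [(hasSum_increment_mul_increment hq).tsum_eq]
  field_simp
  ring
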